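/- arXiv:2012.12576 — 2 statements merged into one kernel-verified Lean document; each statement's English description precedes it below -/
import Mathlib

section
/- Every SetTripleInj-free coisotropic A-module (i.e. A^(M) with ι_M : M_W → M_T injective) is regular projective: for every morphism Ψ : A^(M) → F and every regular epimorphism Φ : E → F of coisotropic A-modules there exists χ : A^(M) → E with Φ ∘ χ = Ψ. -/
/-! Coisotropic index sets and their morphisms. -/

universe u

structure CoisoSet : Type (u + 1) where
  T : Type u
  W : Type u
  N : Set W
  str : W → T

structure CoisoSetHom (M P : CoisoSet.{u}) : Type u where
  T : M.T → P.T
  W : M.W → P.W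
  comm : ∀ x : M.W, T (M.str x) = P.str (W x)
  null : ∀ x ∈ M.N, W x ∈ P.N

def CoisoSetHom.id (M : CoisoSet) : CoisoSetHom M M :=
  ⟨fun x => x, fun x => x, fun _ => rfl, fun _ h => h⟩

def CoisoSetHom.comp {M P Q : CoisoSet} (g : CoisoSetHom P Q)
    (f : CoisoSetHom M P) : CoisoSetHom M Q :=
  ⟨g.T ∘ f.T, g.W ∘ f.W,
    fun x => by simp only [Function.comp_apply, f.comm, g.comm],
    fun x hx => g.null _ (f.null _ hx)⟩

/-! Coisotropic algebras and coisotropic (right) modules over them.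
Following the paper, a coisotropic algebra is a triple `(A_T, A_W, A_0)`
of unital `k`-algebras with a two-sided ideal `A_0 ⊆ A_W` and a unital
algebra morphism `ι : A_W → A_T`.  Modules are formalized with Lean's
(left) module conventions. -/

structure CoisoAlg (k : Type u) [CommRing k] : Type (u + 1) where
  T : Type u
  W : Type u
  [ringT : Ring T]
  [ringW : Ring W]
  [algT : Algebra k T]
  [algW : Algebra k W]
  /-- `N` is a left ideal ... -/
  N : Ideal W
  /-- ... which is also a right ideal, hence two-sided. -/
  N_mul_right : ∀ x ∈ N, ∀ a : W, x * a ∈ N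
  str : W →ₐ[k] T

attribute [instance] CoisoAlg.ringT CoisoAlg.ringW CoisoAlg.algT CoisoAlg.algW

variable {k : Type u} [CommRing k]

/-- A coisotropic module over the coisotropic algebra `A`. -/
structure CoisoRMod (A : CoisoAlg k) : Type (u + 1) where
  T : Type u
  W : Type u
  [addT : AddCommGroup T]
  [addW : AddCommGroup W]
  [modT : Module A.T T]
  [modW : Module A.W W]
  N : Submodule A.W W
  null_smul : ∀ a ∈ A.N, ∀ x : W, a • x ∈ N
  str : W → T
  str_add : ∀ x y : W, str (x + y) = str x + str y
  str_smul : ∀ (a : A.W) (x : W), str (a • x) = A.str a • str x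

attribute [instance] CoisoRMod.addT CoisoRMod.addW CoisoRMod.modT CoisoRMod.modW

variable {A : CoisoAlg k}

theorem CoisoRMod.str_zero (E : CoisoRMod A) : E.str 0 = 0 := by
  have h := E.str_add 0 0
  rw [add_zero] at h
  exact (left_eq_add.mp h)

/-- Morphisms of coisotropic modules over `A`. -/
structure CoisoRModHom (E F : CoisoRMod A) : Type u where
  T : E.T →ₗ[A.T] F.T
  W : E.W →ₗ[A.W] F.W
  comm : ∀ x : E.W, T (E.str x) = F.str (W x)
  null : ∀ x ∈ E.N, W x ∈ F.N

theorem CoisoRModHom.ext' {E F : CoisoRMod A} {f g : CoisoRModHom E F}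
    (h1 : f.T = g.T) (h2 : f.W = g.W) : f = g := by
  cases f; cases g; cases h1; cases h2; rfl

def CoisoRModHom.id (E : CoisoRMod A) : CoisoRModHom E E :=
  ⟨LinearMap.id, LinearMap.id, fun _ => rfl, fun _ h => h⟩

def CoisoRModHom.comp {E F G : CoisoRMod A} (g : CoisoRModHom F G)
    (f : CoisoRModHom E F) : CoisoRModHom E G :=
  ⟨g.T ∘ₗ f.T, g.W ∘ₗ f.W,
    fun x => by simp only [LinearMap.comp_apply, f.comm, g.comm],
    fun x hx => g.null _ (f.null _ hx)⟩

/-- Regular epimorphisms of coisotropic modules: both components surjective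
and the null submodule mapped onto the null submodule. -/
def IsRegEpiMod {E F : CoisoRMod A} (Φ : CoisoRModHom E F) : Prop :=
  Function.Surjective Φ.T ∧ Function.Surjective Φ.W ∧
    ∀ y ∈ F.N, ∃ x ∈ E.N, Φ.W x = y

/-- A coisotropic module is regular projective if morphisms out of it lift
along regular epimorphisms. -/
def RegProjective (P : CoisoRMod A) : Prop :=
  ∀ (E F : CoisoRMod A) (Φ : CoisoRModHom E F) (Ψ : CoisoRModHom P F),
    IsRegEpiMod Φ → ∃ χ : CoisoRModHom P E, Φ.comp χ = Ψ

/-- Isomorphisms of coisotropic modules. -/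
def IsIsoMod {E F : CoisoRMod A} (Φ : CoisoRModHom E F) : Prop :=
  ∃ Ψ : CoisoRModHom F E,
    Φ.comp Ψ = CoisoRModHom.id F ∧ Ψ.comp Φ = CoisoRModHom.id E

/-- The free coisotropic `A`-module on a coisotropic index set `M`. -/
noncomputable def freeMod (A : CoisoAlg k) (M : CoisoSet.{u}) : CoisoRMod A where
  T := M.T →₀ A.T
  W := M.W →₀ A.W
  N :=
    { carrier := {f : M.W →₀ A.W | ∀ m, m ∉ M.N → f m ∈ A.N}
      add_mem' := fun hf hg m hm => by
        simpa [Finsupp.add_apply] using A.N.add_mem (hf m hm) (hg m hm)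
      zero_mem' := fun m hm => by simp
      smul_mem' := fun a f hf m hm => by
        simpa [Finsupp.smul_apply] using A.N.smul_mem a (hf m hm) }
  null_smul := fun a ha f m hm => by
    simpa [Finsupp.smul_apply, smul_eq_mul] using A.N_mul_right a ha (f m)
  str := fun f => f.sum fun m a => Finsupp.single (M.str m) (A.str a)
  str_add := fun f g =>
    Finsupp.sum_add_index' (fun m => by simp) (fun m a b => by
      simp [map_add, Finsupp.single_add])
  str_smul := fun a f => by
    classical
    show (a • f).sum (fun m b => Finsupp.single (M.str m) (A.str b)) =
      A.str a • f.sum (fun m b => Finsupp.single (M.str m) (A.str b))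
    rw [Finsupp.sum_smul_index (fun m => by simp), Finsupp.smul_sum]
    refine Finsupp.sum_congr ?_
    intro m _
    rw [map_mul]
    exact (Finsupp.smul_single' _ _ _).symm

/-- `A` as a coisotropic module over itself. -/
def selfMod (A : CoisoAlg k) : CoisoRMod A where
  T := A.T
  W := A.W
  N := A.N
  null_smul := fun a ha x => by
    simpa [smul_eq_mul] using A.N_mul_right a ha x
  str := A.str
  str_add := fun x y => map_add _ x y
  str_smul := fun a x => by simp [smul_eq_mul, map_mul]

/-- The coisotropic index set underlying a coisotropic module. -/
def toCoisoSet (E : CoisoRMod A) : CoisoSet.{u} :=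
  ⟨E.T, E.W, (E.N : Set E.W), E.str⟩

/-! A morphism out of `A^(M)` is the same as a choice of images of the generators
`single t 1` (`t ∈ M_T`) and `single m 1` (`m ∈ M_W`), compatible with `ι` and sending
generators indexed by `M_0` into the null part. Lift the `W`-generators through `Φ_W`, taking
null preimages over `M_0` (possible since `Φ_W(E_0) = F_0`). On the `T`-side a generator
`ι_M m` is forced to go to `ι_E` of the lift of `single m 1`, which is well defined because
`ι_M` is injective; the remaining `T`-generators are lifted arbitrarily through `Φ_T`. -/

theorem Function.Surjective.exists_lift_extend {α β X Y : Type*} {φ : X → Y}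
    (hφ : Function.Surjective φ) {s : α → β} (hs : Function.Injective s) (e : α → X)
    (y : β → Y) (he : ∀ a, φ (e a) = y (s a)) :
    ∃ e' : β → X, (∀ b, φ (e' b) = y b) ∧ ∀ a, e' (s a) = e a := by
  refine ⟨Function.extend s e (fun b => (hφ (y b)).choose), fun b => ?_, hs.extend_apply _ _⟩
  by_cases hb : ∃ a, s a = b
  · obtain ⟨a, rfl⟩ := hb
    rw [hs.extend_apply, he]
  · rw [Function.extend_apply' _ _ _ hb]
    exact (hφ (y b)).choose_spec

def CoisoRMod.strHom (E : CoisoRMod A) : E.W →+ E.T :=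
  AddMonoidHom.mk' E.str E.str_add

@[simp]
theorem CoisoRMod.strHom_apply (E : CoisoRMod A) (x : E.W) : E.strHom x = E.str x := rfl

theorem IsRegEpiMod.exists_lift_W {E F : CoisoRMod A} {Φ : CoisoRModHom E F}
    (hΦ : IsRegEpiMod Φ) {ι : Type*} (S : Set ι)
    (y : ι → F.W) (hy : ∀ i ∈ S, y i ∈ F.N) :
    ∃ e : ι → E.W, (∀ i, Φ.W (e i) = y i) ∧ ∀ i ∈ S, e i ∈ E.N := by
  have h : ∀ i, ∃ x, Φ.W x = y i ∧ (i ∈ S → x ∈ E.N) := by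
    intro i
    by_cases hi : i ∈ S
    · obtain ⟨x, hx, hxy⟩ := hΦ.2.2 _ (hy i hi)
      exact ⟨x, hxy, fun _ => hx⟩
    · obtain ⟨x, hx⟩ := hΦ.2.1 (y i)
      exact ⟨x, hx, fun h => absurd h hi⟩
  choose e he heN using h
  exact ⟨e, he, heN⟩

namespace freeMod

variable {M : CoisoSet.{u}}

theorem str_single (m : M.W) (a : A.W) :
    (freeMod A M).str (Finsupp.single m a) = Finsupp.single (M.str m) (A.str a) := by
  show (Finsupp.single m a).sum (fun m b => Finsupp.single (M.str m) (A.str b)) = _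
  rw [Finsupp.sum_single_index (by rw [map_zero, Finsupp.single_zero])]

theorem single_mem_N {m : M.W} (hm : m ∈ M.N) (a : A.W) :
    (Finsupp.single m a : (freeMod A M).W) ∈ (freeMod A M).N := by
  intro m' hm'
  show Finsupp.single m a m' ∈ A.N
  rw [Finsupp.single_eq_of_ne (by rintro rfl; exact hm' hm)]
  exact A.N.zero_mem

variable {E : CoisoRMod A}

noncomputable def lift (eT : M.T → E.T) (eW : M.W → E.W)
    (hcomm : ∀ m, eT (M.str m) = E.str (eW m)) (hnull : ∀ m ∈ M.N, eW m ∈ E.N) :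
    CoisoRModHom (freeMod A M) E where
  T := Finsupp.linearCombination A.T eT
  W := Finsupp.linearCombination A.W eW
  comm := fun (f : M.W →₀ A.W) => by
    change Finsupp.linearCombination A.T eT
        (f.sum fun m a => Finsupp.single (M.str m) (A.str a)) =
      E.strHom (Finsupp.linearCombination A.W eW f)
    rw [map_finsuppSum, Finsupp.linearCombination_apply, map_finsuppSum]
    simp only [Finsupp.linearCombination_single, hcomm, CoisoRMod.strHom_apply, E.str_smul]
  null := fun (f : M.W →₀ A.W) hf => by
    change Finsupp.linearCombination A.W eW f ∈ E.N
    rw [Finsupp.linearCombination_apply]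
    refine Submodule.sum_mem _ fun m _ => ?_
    by_cases hm : m ∈ M.N
    · exact E.N.smul_mem _ (hnull m hm)
    · exact E.null_smul _ (hf m hm) _

variable {eT : M.T → E.T} {eW : M.W → E.W} {hcomm : ∀ m, eT (M.str m) = E.str (eW m)}
  {hnull : ∀ m ∈ M.N, eW m ∈ E.N}

@[simp]
theorem lift_T_single (t : M.T) :
    (lift eT eW hcomm hnull).T (Finsupp.single t 1) = eT t :=
  (Finsupp.linearCombination_single A.T (v := eT) 1 t).trans (one_smul _ _)

@[simp]
theorem lift_W_single (m : M.W) :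
    (lift eT eW hcomm hnull).W (Finsupp.single m 1) = eW m :=
  (Finsupp.linearCombination_single A.W (v := eW) 1 m).trans (one_smul _ _)

theorem hom_ext {f g : CoisoRModHom (freeMod A M) E}
    (hT : ∀ t : M.T, f.T (Finsupp.single t 1) = g.T (Finsupp.single t 1))
    (hW : ∀ m : M.W, f.W (Finsupp.single m 1) = g.W (Finsupp.single m 1)) : f = g :=
  CoisoRModHom.ext' (Finsupp.basisSingleOne.ext hT) (Finsupp.basisSingleOne.ext hW)

theorem hom_T_single_str (f : CoisoRModHom (freeMod A M) E) (m : M.W) :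
    f.T (Finsupp.single (M.str m) 1) = E.str (f.W (Finsupp.single m 1)) := by
  have h := f.comm (Finsupp.single m 1)
  rwa [str_single, map_one] at h

end freeMod

/-- every `SetTripleInj`-free coisotropic `A`-module, i.e.
`A^(M)` with `ι_M` injective, is regular projective. -/
theorem freeMod_regProjective (A : CoisoAlg k) (M : CoisoSet.{u})
    (hM : Function.Injective M.str) : RegProjective (freeMod A M) := by
  intro E F Φ Ψ hΦ
  obtain ⟨eW, hΦeW, heW_null⟩ := hΦ.exists_lift_W M.N (fun m => Ψ.W (Finsupp.single m 1))
    fun m hm => Ψ.null _ (freeMod.single_mem_N hm 1)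
  obtain ⟨eT, hΦeT, heT_str⟩ := hΦ.1.exists_lift_extend hM (fun m => E.str (eW m))
    (fun t => Ψ.T (Finsupp.single t 1))
    fun m => by rw [Φ.comm, hΦeW, freeMod.hom_T_single_str]
  refine ⟨freeMod.lift eT eW heT_str heW_null, freeMod.hom_ext (fun t => ?_) (fun m => ?_)⟩
  · exact (congrArg Φ.T (freeMod.lift_T_single t)).trans (hΦeT t)
  · exact (congrArg Φ.W (freeMod.lift_W_single m)).trans (hΦeW m)
end

section
/- If P is a regular projective coisotropic A-module with generating set M (ι_M injective, M finite), then the reduced module P_red = P_W / P_0 is a projective A_red-module, where A_red = A_W / A_0, with generating set M_W \ M_0. In particular (A^(M))_red ≅ (A_red)^(M_W \ M_0). -/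
/-! Coisotropic index sets and their morphisms. -/

universe u

variable {k : Type u} [CommRing k]

variable {A : CoisoAlg k}

/-- Short exactness of `0 → E →Φ F →Ψ P → 0`: `Φ` is a monomorphism (both
components injective), the image of `Φ` equals the kernel of `Ψ` as
coisotropic submodules (in particular `Φ_W(E_0) = ker Ψ_W ∩ F_0`), and `Ψ`
is a regular epimorphism. -/
def ShortExact {E F P : CoisoRMod A} (Φ : CoisoRModHom E F)
    (Ψ : CoisoRModHom F P) : Prop :=
  Function.Injective Φ.T ∧ Function.Injective Φ.W ∧
    LinearMap.range Φ.T = LinearMap.ker Ψ.T ∧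
    LinearMap.range Φ.W = LinearMap.ker Ψ.W ∧
    Φ.W '' (E.N : Set E.W) =
      (LinearMap.ker Ψ.W : Set F.W) ∩ (F.N : Set F.W) ∧
    IsRegEpiMod Ψ

/-- The componentwise direct sum of coisotropic modules. -/
def dsum (E G : CoisoRMod A) : CoisoRMod A where
  T := E.T × G.T
  W := E.W × G.W
  N := E.N.prod G.N
  null_smul := fun a ha x =>
    ⟨E.null_smul a ha x.1, G.null_smul a ha x.2⟩
  str := fun x => (E.str x.1, G.str x.2)
  str_add := fun x y => by
    simp only [Prod.fst_add, Prod.snd_add, E.str_add, G.str_add]; rfl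
  str_smul := fun a x => by
    simp only [Prod.smul_fst, Prod.smul_snd, E.str_smul, G.str_smul]; rfl

/-- The canonical inclusion `E → E ⊕ G`. -/
def dsumInl (E G : CoisoRMod A) : CoisoRModHom E (dsum E G) where
  T := LinearMap.inl A.T E.T G.T
  W := LinearMap.inl A.W E.W G.W
  comm := fun x => by
    show (E.str x, (0 : G.T)) = (E.str x, G.str 0)
    rw [G.str_zero]
  null := fun x hx => ⟨hx, G.N.zero_mem⟩

/-- The canonical projection `E ⊕ G → G`. -/
def dsumPr (E G : CoisoRMod A) : CoisoRModHom (dsum E G) G where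
  T := LinearMap.snd A.T E.T G.T
  W := LinearMap.snd A.W E.W G.W
  comm := fun _ => rfl
  null := fun x hx => hx.2

/-! A retraction `θ : A^(M) → P ⊕ E` with section `Ψ` sends the standard basis `e_m` to
generators `p_m = pr_P (θ e_m)` of `P_W`, with coordinate functionals `ℓ_m = e_m^* ∘ Ψ ∘ inl`.
Since `θ` preserves null parts, `p_m ∈ P_0` for `m ∈ M_0`, so modulo `P_0` only the indices in
`M_W \ M_0` survive; and `Ψ` preserves null parts, so the `ℓ_m` with `m ∉ M_0` send `P_0` into
`A_0`. For `A^(M)` itself, reducing the coefficients at indices outside `M_0` is a surjection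
onto `(A_red)^(M_W \ M_0)` whose kernel is exactly the null part of `A^(M)`. -/

theorem LinearMap.apply_eq_sum_smul_single_one {R V ι : Type*} [Semiring R] [AddCommMonoid V]
    [Module R V] (g : (ι →₀ R) →ₗ[R] V) (f : ι →₀ R) :
    g f = f.sum fun i a => a • g (Finsupp.single i 1) := by
  calc g f = Finsupp.lift V R ι ((Finsupp.lift V R ι).symm g) f := by
        rw [AddEquiv.apply_symm_apply]
    _ = _ := by simp only [Finsupp.lift_apply, Finsupp.lift_symm_apply]

theorem Finsupp.sum_smul_sub_finsum_compl_mem {R V ι : Type*} [Ring R] [AddCommGroup V]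
    [Module R V] {N : Submodule R V} {s : Set ι} {p : ι → V} (hp : ∀ i ∈ s, p i ∈ N)
    (f : ι →₀ R) : (f.sum fun i a => a • p i) - ∑ᶠ i : {i // i ∉ s}, f i • p i ∈ N := by
  classical
  have hcompl : ∑ᶠ i : {i // i ∉ s}, f i • p i = ∑ i ∈ f.support with i ∉ s, f i • p i := by
    rw [finsum_subtype_eq_finsum_cond (f := fun i => f i • p i) (· ∉ s)]
    refine finsum_cond_eq_sum_of_cond_iff _ fun {i} hi => ?_
    have hfi : f i ≠ 0 := fun h => hi (by rw [h, zero_smul])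
    simp [hfi]
  rw [hcompl, Finsupp.sum, ← Finset.sum_filter_add_sum_filter_not f.support (· ∈ s),
    add_sub_cancel_right]
  exact N.sum_mem fun i hi => N.smul_mem _ (hp i (Finset.mem_filter.mp hi).2)

section ReduceCompl

variable {R V ι : Type*} [Ring R] [AddCommGroup V] [Module R V] (I : Submodule R V) (s : Set ι)

noncomputable def Finsupp.restrictComplMkQ : (ι →₀ V) →ₗ[R] ({i // i ∉ s} →₀ V ⧸ I) :=
  Finsupp.mapRange.linearMap I.mkQ ∘ₗ Finsupp.lcomapDomain Subtype.val Subtype.val_injective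

variable {I s}

@[simp]
theorem Finsupp.restrictComplMkQ_apply (f : ι →₀ V) (i : {i // i ∉ s}) :
    Finsupp.restrictComplMkQ I s f i = Submodule.Quotient.mk (f i) := by
  simp [Finsupp.restrictComplMkQ, Finsupp.lcomapDomain, Finsupp.comapDomain_apply]

theorem Finsupp.mem_ker_restrictComplMkQ {f : ι →₀ V} :
    f ∈ LinearMap.ker (Finsupp.restrictComplMkQ I s) ↔ ∀ i ∉ s, f i ∈ I := by
  simp [LinearMap.mem_ker, Finsupp.ext_iff, Submodule.Quotient.mk_eq_zero]

theorem Finsupp.restrictComplMkQ_surjective :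
    Function.Surjective (Finsupp.restrictComplMkQ I s) :=
  (Finsupp.mapRange_surjective _ I.mkQ.map_zero I.mkQ_surjective).comp
    (Finsupp.comapDomain_surjective Subtype.val_injective)

end ReduceCompl

section Reduction

variable {M : CoisoSet.{u}}

theorem single_mem_freeMod_N {m : M.W} (hm : m ∈ M.N) (a : A.W) :
    Finsupp.single m a ∈ (freeMod A M).N := fun m' hm' => by
  have hne : m' ≠ m := by rintro rfl; exact hm' hm
  rw [Finsupp.single_eq_of_ne hne]
  exact A.N.zero_mem

variable (A M)

theorem freeMod_N_eq_ker :
    (freeMod A M).N =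
      (LinearMap.ker (Finsupp.restrictComplMkQ A.N M.N) : Submodule A.W (freeMod A M).W) :=
  Submodule.ext fun _ => Finsupp.mem_ker_restrictComplMkQ.symm

noncomputable def freeModRedEquiv : ((freeMod A M).W ⧸ (freeMod A M).N) ≃ₗ[A.W]
    ({m : M.W // m ∉ M.N} →₀ (A.W ⧸ (A.N : Submodule A.W A.W))) :=
  (Submodule.quotEquivOfEq _ _ (freeMod_N_eq_ker A M)).trans
    (LinearMap.quotKerEquivOfSurjective _ Finsupp.restrictComplMkQ_surjective)

theorem freeModRedEquiv_mk_apply (f : M.W →₀ A.W) (m : {m : M.W // m ∉ M.N}) :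
    freeModRedEquiv A M (Submodule.Quotient.mk f) m = Submodule.Quotient.mk (f m.val) :=
  Finsupp.restrictComplMkQ_apply f m

variable {A M}

theorem exists_red_dualBasis_of_retract {P E : CoisoRMod A}
    (θ : CoisoRModHom (freeMod A M) (dsum P E)) (Ψ : CoisoRModHom (dsum P E) (freeMod A M))
    (hθΨ : θ.comp Ψ = CoisoRModHom.id (dsum P E)) :
    ∃ (p : {m : M.W // m ∉ M.N} → P.W)
      (ℓ : {m : M.W // m ∉ M.N} → (P.W →ₗ[A.W] A.W)),
      (∀ m, ∀ x ∈ P.N, ℓ m x ∈ A.N) ∧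
      (∀ x : P.W, x - ∑ᶠ m, ℓ m x • p m ∈ P.N) := by
  let π : (M.W →₀ A.W) →ₗ[A.W] P.W := LinearMap.fst A.W P.W E.W ∘ₗ θ.W
  let ψ : P.W →ₗ[A.W] (M.W →₀ A.W) := Ψ.W ∘ₗ LinearMap.inl A.W P.W E.W
  have hπψ (x : P.W) : π (ψ x) = x :=
    congrArg Prod.fst (LinearMap.congr_fun (congrArg CoisoRModHom.W hθΨ) (x, 0))
  have hπ_null (m : M.W) (hm : m ∈ M.N) : π (Finsupp.single m 1) ∈ P.N :=
    (θ.null _ (single_mem_freeMod_N hm 1)).1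
  refine ⟨fun m => π (Finsupp.single m.val 1), fun m => Finsupp.lapply m.val ∘ₗ ψ,
    fun m x hx => Ψ.null (x, 0) ⟨hx, E.N.zero_mem⟩ m.val m.property, fun x => ?_⟩
  have h := Finsupp.sum_smul_sub_finsum_compl_mem hπ_null (ψ x)
  rwa [← LinearMap.apply_eq_sum_smul_single_one, hπψ] at h

end Reduction

/-- Projectivity of `P_red` over `A_red` is encoded by a dual basis modulo the null parts: the
`ℓ_m` send `P_0` into `A_0`, hence descend to functionals `P_red → A_red`. -/
theorem red_of_regProjective_general (A : CoisoAlg k) (M : CoisoSet.{u})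
    (P : CoisoRMod A)
    (hP : ∃ (E : CoisoRMod A)
      (θ : CoisoRModHom (freeMod A M) (dsum P E)), IsIsoMod θ) :
    (∃ (p : {m : M.W // m ∉ M.N} → P.W)
      (ℓ : {m : M.W // m ∉ M.N} → (P.W →ₗ[A.W] A.W)),
      (∀ m, ∀ x ∈ P.N, ℓ m x ∈ A.N) ∧
      (∀ x : P.W, x - ∑ᶠ m, ℓ m x • p m ∈ P.N)) ∧
    ∃ eq : ((freeMod A M).W ⧸ (freeMod A M).N) ≃ₗ[A.W]
        ({m : M.W // m ∉ M.N} →₀ (A.W ⧸ (A.N : Submodule A.W A.W))),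
      ∀ (f : M.W →₀ A.W) (m : {m : M.W // m ∉ M.N}),
        eq (Submodule.Quotient.mk f) m = Submodule.Quotient.mk (f m.val) := by
  obtain ⟨E, θ, Ψ, hθΨ, -⟩ := hP
  exact ⟨exists_red_dualBasis_of_retract θ Ψ hθΨ, freeModRedEquiv A M,
    freeModRedEquiv_mk_apply A M⟩

/-- if `P` is a regular projective coisotropic `A`-module
with finite generating set `M` (with `ι_M` injective), then the reduced
module `P_red = P_W / P_0` is a projective `A_red = A_W / A_0`-module with
generating set `M_W \ M_0`; in particular
`(A^(M))_red ≅ (A_red)^(M_W \ M_0)`.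

Projectivity of `P_red` over `A_red` is expressed by a (finite) dual basis:
elements `p_m ∈ P_W` and `A_W`-linear functionals `ℓ_m : P_W → A_W`
mapping `P_0` into `A_0` (hence descending to `A_red`-linear functionals
`P_red → A_red`), indexed by `M_W \ M_0`, which form a dual basis modulo
the null components.  The isomorphism `(A^(M))_red ≅ (A_red)^(M_W \ M_0)`
is an `A_W`-linear equivalence of the quotient modules, given by reducing
coefficients. -/
theorem red_of_regProjective (A : CoisoAlg k) (M : CoisoSet.{u})
    (hM : Function.Injective M.str) (hTfin : Finite M.T)
    (hWfin : Finite M.W) (P : CoisoRMod A)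
    (hP : ∃ (E : CoisoRMod A)
      (θ : CoisoRModHom (freeMod A M) (dsum P E)), IsIsoMod θ) :
    (∃ (p : {m : M.W // m ∉ M.N} → P.W)
      (ℓ : {m : M.W // m ∉ M.N} → (P.W →ₗ[A.W] A.W)),
      (∀ m, ∀ x ∈ P.N, ℓ m x ∈ A.N) ∧
      (∀ x : P.W, x - ∑ᶠ m, ℓ m x • p m ∈ P.N)) ∧
    ∃ eq : ((freeMod A M).W ⧸ (freeMod A M).N) ≃ₗ[A.W]
        ({m : M.W // m ∉ M.N} →₀ (A.W ⧸ (A.N : Submodule A.W A.W))),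
      ∀ (f : M.W →₀ A.W) (m : {m : M.W // m ∉ M.N}),
        eq (Submodule.Quotient.mk f) m = Submodule.Quotient.mk (f m.val) :=
  red_of_regProjective_general A M P hP
end
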